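/- arXiv:1203.6546 — 8 statements merged into one kernel-verified Lean document; each statement's English description precedes it below -/
import Mathlib

section
/- Let K be a finite field of characteristic different from 2, K̄ an algebraic closure of K, and n ≥ 2 an even integer. Then the centraliser of Sp_n(K) in GSp_n(K̄) is exactly the group of scalar matrices {λ·Id_n : λ ∈ K̄^×}: a matrix A ∈ GSp_n(K̄) satisfies A B A⁻¹ = B for all B ∈ Sp_n(K) if and only if A = λ·Id_n for some λ ∈ K̄^×. -/
/-!
Already the unipotent elements `[[1, X], [0, 1]]` and `[[1, 0], [X, 1]]` of `Sp_n(K)`, with `X`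
symmetric, have only scalar matrices in their centraliser. Taking `X = 1` forces a matrix
commuting with them to be of block form `diag(a, a)`, and then `a` commutes with every symmetric
`X`, hence with each `E_ij = E_ii (E_ij + E_ji)` (`i ≠ j`), so `a` is scalar.
-/

open Matrix

noncomputable section

/-- The Gram matrix of the standard symplectic form on `R^n` (for `n` even):
block form `[[0, I], [-I, 0]]`. -/
def stdJ (n : ℕ) (R : Type*) [CommRing R] : Matrix (Fin n) (Fin n) R :=
  Matrix.of fun i j =>
    if i.val + n / 2 = j.val then 1 else if j.val + n / 2 = i.val then -1 else 0

/-- Membership in the general symplectic group `GSp_n(R)`. -/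
def IsGSp (n : ℕ) (R : Type*) [CommRing R] (M : Matrix (Fin n) (Fin n) R) : Prop :=
  IsUnit M ∧ ∃ α : Rˣ, Mᵀ * stdJ n R * M = (α : R) • stdJ n R

/-- Membership in the symplectic group `Sp_n(R)`. -/
def IsSp (n : ℕ) (R : Type*) [CommRing R] (M : Matrix (Fin n) (Fin n) R) : Prop :=
  IsUnit M ∧ Mᵀ * stdJ n R * M = stdJ n R

namespace Matrix

variable {ι : Type*} [Fintype ι] [DecidableEq ι]

theorem mem_range_scalar_of_commute_isSymm {R S : Type*} [Semiring R] [Semiring S] (f : R →+* S)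
    {M : Matrix ι ι S} (hM : ∀ X : Matrix ι ι R, X.IsSymm → Commute (X.map f) M) :
    M ∈ Set.range (scalar ι) := by
  refine mem_range_scalar_of_commute_single fun i j hij => ?_
  have hsingle : single i j (1 : S) =
      (single i i (1 : R)).map f * (single i j (1 : R) + (single i j 1)ᵀ).map f := by
    simp [Matrix.map_add, mul_add, hij]
  change Commute _ M
  rw [hsingle]
  exact (hM _ (transpose_single i i 1)).mul_left (hM _ (isSymm_add_transpose_self _))

theorem commute_fromBlocks_one₁₂_iff {R : Type*} [Ring R] (X a b c d : Matrix ι ι R) :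
    Commute (fromBlocks 1 X 0 1) (fromBlocks a b c d) ↔
      X * c = 0 ∧ X * d = a * X ∧ c * X = 0 := by
  rw [Commute, SemiconjBy, fromBlocks_multiply, fromBlocks_multiply, fromBlocks_inj]
  simp only [Matrix.one_mul, Matrix.mul_one, Matrix.zero_mul, Matrix.mul_zero, add_zero, zero_add]
  constructor
  · rintro ⟨h₁, h₂, -, h₄⟩
    exact ⟨by simpa using h₁, by simpa [add_comm] using h₂, by simpa using h₄⟩
  · rintro ⟨h₁, h₂, h₃⟩
    simp [h₁, h₂, h₃, add_comm]

theorem commute_fromBlocks_one₂₁_iff {R : Type*} [Ring R] (X a b c d : Matrix ι ι R) :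
    Commute (fromBlocks 1 0 X 1) (fromBlocks a b c d) ↔
      b * X = 0 ∧ X * a = d * X ∧ X * b = 0 := by
  rw [Commute, SemiconjBy, fromBlocks_multiply, fromBlocks_multiply, fromBlocks_inj]
  simp only [Matrix.one_mul, Matrix.mul_one, Matrix.zero_mul, Matrix.mul_zero, add_zero, zero_add]
  constructor
  · rintro ⟨h₁, -, h₃, h₄⟩
    exact ⟨by simpa using h₁, by simpa [add_comm] using h₃, by simpa using h₄⟩
  · rintro ⟨h₁, h₂, h₃⟩
    simp [h₁, h₂, h₃, add_comm]

theorem mem_range_scalar_of_commute_fromBlocks_one {R S : Type*} [Semiring R] [Ring S]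
    (f : R →+* S) {M : Matrix (ι ⊕ ι) (ι ⊕ ι) S}
    (h₁₂ : ∀ X : Matrix ι ι R, X.IsSymm → Commute (fromBlocks 1 (X.map f) 0 1) M)
    (h₂₁ : ∀ X : Matrix ι ι R, X.IsSymm → Commute (fromBlocks 1 0 (X.map f) 1) M) :
    M ∈ Set.range (scalar (ι ⊕ ι)) := by
  rw [← fromBlocks_toBlocks M] at h₁₂ h₂₁ ⊢
  have hone : (1 : Matrix ι ι R).map f = 1 := Matrix.map_one _ f.map_zero f.map_one
  obtain ⟨hc, hd, -⟩ :=
    (commute_fromBlocks_one₁₂_iff _ _ _ _ _).1 (hone ▸ h₁₂ 1 isSymm_one)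
  obtain ⟨hb, -, -⟩ :=
    (commute_fromBlocks_one₂₁_iff _ _ _ _ _).1 (hone ▸ h₂₁ 1 isSymm_one)
  simp only [Matrix.one_mul, Matrix.mul_one] at hb hc hd
  obtain ⟨r, hr⟩ := mem_range_scalar_of_commute_isSymm f fun X hX =>
    hd ▸ ((commute_fromBlocks_one₁₂_iff _ _ _ _ _).1 (h₁₂ X hX)).2.1
  refine ⟨r, ?_⟩
  rw [hb, hc, hd, ← hr, scalar_apply, scalar_apply, fromBlocks_diagonal]
  exact congrArg diagonal (Sum.elim_const_const r).symm

end Matrix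

theorem stdJ_add_self (m : ℕ) (R : Type*) [CommRing R] :
    stdJ (m + m) R = reindex finSumFinEquiv finSumFinEquiv (fromBlocks 0 1 (-1) 0) := by
  have hm : (m + m) / 2 = m := by omega
  rw [eq_comm, ← Equiv.eq_symm_apply, reindex_symm, reindex_apply]
  ext (p | p) (q | q) <;> simp [stdJ, hm, one_apply, Fin.ext_iff] <;> split_ifs <;>
    first | omega | simp

theorem isSp_reindex_finSumFinEquiv_iff {m : ℕ} {R : Type*} [CommRing R]
    (M : Matrix (Fin m ⊕ Fin m) (Fin m ⊕ Fin m) R) :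
    IsSp (m + m) R (reindex finSumFinEquiv finSumFinEquiv M) ↔
      IsUnit M ∧ Mᵀ * fromBlocks 0 1 (-1) 0 * M = fromBlocks 0 1 (-1) 0 := by
  let φ := reindexRingEquiv R (finSumFinEquiv (m := m) (n := m))
  have hφ : ∀ N, reindex finSumFinEquiv finSumFinEquiv N = φ N := fun _ => rfl
  rw [IsSp, stdJ_add_self, transpose_reindex, hφ, hφ, hφ, ← map_mul, ← map_mul,
    φ.injective.eq_iff, isUnit_map_iff]

theorem isSp_reindex_fromBlocks_one₁₂ {m : ℕ} {R : Type*} [CommRing R]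
    {X : Matrix (Fin m) (Fin m) R} (hX : X.IsSymm) :
    IsSp (m + m) R (reindex finSumFinEquiv finSumFinEquiv (fromBlocks 1 X 0 1)) := by
  rw [isSp_reindex_finSumFinEquiv_iff, isUnit_iff_isUnit_det, det_fromBlocks_zero₂₁]
  refine ⟨by simp, ?_⟩
  simp [fromBlocks_transpose, fromBlocks_multiply, hX.eq]

theorem isSp_reindex_fromBlocks_one₂₁ {m : ℕ} {R : Type*} [CommRing R]
    {X : Matrix (Fin m) (Fin m) R} (hX : X.IsSymm) :
    IsSp (m + m) R (reindex finSumFinEquiv finSumFinEquiv (fromBlocks 1 0 X 1)) := by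
  rw [isSp_reindex_finSumFinEquiv_iff, isUnit_iff_isUnit_det, det_fromBlocks_zero₁₂]
  refine ⟨by simp, ?_⟩
  simp [fromBlocks_transpose, fromBlocks_multiply, hX.eq]

theorem mem_range_scalar_of_commute_isSp {R S : Type*} [CommRing R] [Ring S] (f : R →+* S)
    {m : ℕ} {A : Matrix (Fin (m + m)) (Fin (m + m)) S}
    (hA : ∀ B, IsSp (m + m) R B → Commute (B.map f) A) :
    A ∈ Set.range (scalar (Fin (m + m))) := by
  let φ := reindexRingEquiv S (finSumFinEquiv (m := m) (n := m))
  have hcomm : ∀ B, IsSp (m + m) R (reindex finSumFinEquiv finSumFinEquiv B) →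
      Commute (B.map f) (φ.symm A) := fun B hB => by
    simpa [φ, reindex_apply, submatrix_map] using (hA _ hB).map φ.symm
  obtain ⟨r, hr⟩ := mem_range_scalar_of_commute_fromBlocks_one f (M := φ.symm A)
    (fun X hX => by simpa [fromBlocks_map] using hcomm _ (isSp_reindex_fromBlocks_one₁₂ hX))
    (fun X hX => by simpa [fromBlocks_map] using hcomm _ (isSp_reindex_fromBlocks_one₂₁ hX))
  refine ⟨r, ?_⟩
  rw [← φ.apply_symm_apply A, ← hr]
  simp [φ, Function.comp_def]

theorem centraliser_of_Sp_eq_scalars_general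
    {K : Type*} [Field K]
    {n : ℕ} (hn2 : 2 ≤ n) (hneven : Even n)
    (A : Matrix (Fin n) (Fin n) (AlgebraicClosure K))
    (hA : IsGSp n (AlgebraicClosure K) A) :
    (∀ B : Matrix (Fin n) (Fin n) K, IsSp n K B →
        A * B.map (algebraMap K (AlgebraicClosure K)) * A⁻¹
          = B.map (algebraMap K (AlgebraicClosure K)))
      ↔ ∃ lam : (AlgebraicClosure K)ˣ,
          A = (lam : AlgebraicClosure K) • (1 : Matrix (Fin n) (Fin n) (AlgebraicClosure K)) := by
  have hdet : IsUnit A.det := (isUnit_iff_isUnit_det A).mp hA.1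
  constructor
  · intro h
    obtain ⟨m, rfl⟩ := hneven
    obtain ⟨r, rfl⟩ := mem_range_scalar_of_commute_isSp (algebraMap K _) (A := A) fun B hB => by
      change _ * A = A * _
      conv_lhs => rw [← h B hB]
      exact nonsing_inv_mul_cancel_right _ _ hdet
    have : NeZero (m + m) := ⟨by omega⟩
    have hr : IsUnit r := by
      simpa [isUnit_diagonal, Pi.isUnit_iff] using hA.1
    exact ⟨hr.unit, by simp [smul_one_eq_diagonal]⟩
  · rintro ⟨lam, rfl⟩ B -
    rw [((Commute.one_left _).smul_left _).eq, mul_nonsing_inv_cancel_right _ _ hdet]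

/-- The centraliser of `Sp_n(K)` in `GSp_n(K̄)` consists exactly of the scalar
matrices `λ · Id` with `λ ∈ K̄^×`. -/
theorem centraliser_of_Sp_eq_scalars
    {K : Type*} [Field K] [Fintype K] (hchar : ringChar K ≠ 2)
    {n : ℕ} (hn2 : 2 ≤ n) (hneven : Even n)
    (A : Matrix (Fin n) (Fin n) (AlgebraicClosure K))
    (hA : IsGSp n (AlgebraicClosure K) A) :
    (∀ B : Matrix (Fin n) (Fin n) K, IsSp n K B →
        A * B.map (algebraMap K (AlgebraicClosure K)) * A⁻¹
          = B.map (algebraMap K (AlgebraicClosure K)))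
      ↔ ∃ lam : (AlgebraicClosure K)ˣ,
          A = (lam : AlgebraicClosure K) • (1 : Matrix (Fin n) (Fin n) (AlgebraicClosure K)) :=
  centraliser_of_Sp_eq_scalars_general hn2 hneven A hA
end
end

section
/- Let L be a field, G a group, ρ: G → GL_n(L) an absolutely irreducible representation, γ a field automorphism of L, and ε: G → L^× a character. Then γ∘ρ (applying γ to every matrix entry) is equivalent to ρ ⊗ ε (i.e. γ∘ρ = M(ρ ⊗ ε)M⁻¹ for some M ∈ GL_n(L)) if and only if γ(Tr(ρ(g))) = Tr(ρ(g))·ε(g) for all g ∈ G. -/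
/-!
Burnside's theorem (Jacobson density together with Schur's lemma over `L̄`) shows that an
absolutely irreducible `ρ` spans `M_n(L̄)`, hence by a dimension count `M_n(L)`, and then so do
`ρ ⊗ ε` and `γ ∘ ρ`. Extend two
representations with equal traces and spanning images to surjections `L[G] → M_n(L)`:
nondegeneracy of the trace form forces their kernels to agree, so they differ by an
automorphism of `M_n(L)`, which is inner by Skolem–Noether.
-/

open Matrix

noncomputable section

/-- Absolute irreducibility: the induced representation on `L̄^n` is irreducible. -/
def MatAbsIrred {G : Type*} (n : ℕ) (L : Type*) [Field L]
    (ρ : G → Matrix (Fin n) (Fin n) L) : Prop :=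
  ∀ W : Submodule (AlgebraicClosure L) (Fin n → AlgebraicClosure L),
    (∀ g, ∀ w ∈ W, ((ρ g).map (algebraMap L (AlgebraicClosure L))).mulVec w ∈ W) →
    W = ⊥ ∨ W = ⊤

theorem Subalgebra.eq_top_of_isSimpleModule {K V : Type*} [Field K] [IsAlgClosed K]
    [AddCommGroup V] [Module K V] [FiniteDimensional K V]
    (A : Subalgebra K (Module.End K V)) [IsSimpleModule A V] : A = ⊤ := by
  have hschur := IsSimpleModule.algebraMap_end_bijective_of_isAlgClosed K (A := A) (V := V)
  have : Module.Finite (Module.End A V) V := .of_restrictScalars_finite K _ _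
  rw [eq_top_iff]
  intro f _
  let f' : Module.End (Module.End A V) V :=
    { toFun := f
      map_add' := f.map_add
      map_smul' := fun c v => by
        obtain ⟨k, rfl⟩ := hschur.2 c
        simp }
  obtain ⟨a, ha⟩ := Module.Finite.toModuleEnd_moduleEnd_surjective f'
  have : (a : Module.End K V) = f := LinearMap.ext fun v => congr(($ha) v)
  exact this ▸ a.2

theorem MonoidHom.span_range_eq_top_of_isAlgClosed {K V G : Type*} [Field K] [IsAlgClosed K]
    [AddCommGroup V] [Module K V] [FiniteDimensional K V] [Monoid G]
    (ρ : G →* Module.End K V)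
    (hirr : ∀ W : Submodule K V, (∀ g, ∀ w ∈ W, ρ g w ∈ W) → W = ⊥ ∨ W = ⊤) :
    Submodule.span K (Set.range ρ) = ⊤ := by
  nontriviality V
  let A := Algebra.adjoin K (Set.range ρ)
  have : IsSimpleModule A V :=
    { eq_bot_or_eq_top N := by
        simpa using hirr (N.restrictScalars K) fun g w hw =>
          N.smul_mem (⟨ρ g, Algebra.subset_adjoin ⟨g, rfl⟩⟩ : A) hw }
  have hA := congr(Subalgebra.toSubmodule $(A.eq_top_of_isSimpleModule))
  rwa [Algebra.adjoin_eq_span, ← MonoidHom.coe_mrange, Submonoid.closure_eq,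
    Algebra.top_toSubmodule, MonoidHom.coe_mrange] at hA

theorem Matrix.span_range_eq_top_of_span_range_map {L K ι m n : Type*} [Field L] [Field K]
    [Algebra L K] [Fintype m] [Fintype n] (v : ι → Matrix m n L)
    (h : Submodule.span K (Set.range fun i => (v i).map (algebraMap L K)) = ⊤) :
    Submodule.span L (Set.range v) = ⊤ := by
  obtain ⟨κ, a, -, hspan, hli⟩ :=
    exists_linearIndependent' K fun i => (v i).map (algebraMap L K)
  have : Fintype κ := @Fintype.ofFinite _ hli.finite
  have hcard : Fintype.card κ = Module.finrank L (Matrix m n L) := by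
    rw [← finrank_span_eq_card hli, hspan, h, finrank_top]
    simp [Module.finrank_matrix]
  have hliL : LinearIndependent L (v ∘ a) :=
    (hli.restrict_scalars' L).of_comp (Algebra.linearMap L K).mapMatrix
  exact top_le_iff.1 <| (hliL.span_eq_top_of_card_eq_finrank' hcard).ge.trans <|
    Submodule.span_mono (Set.range_comp_subset_range a v)

theorem span_range_eq_top_of_matAbsIrred {G L : Type*} [Monoid G] [Field L] {n : ℕ}
    (ρ : G →* Matrix (Fin n) (Fin n) L) (hirr : MatAbsIrred n L fun g => ρ g) :
    Submodule.span L (Set.range ρ) = ⊤ := by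
  let K := AlgebraicClosure L
  refine Matrix.span_range_eq_top_of_span_range_map (K := K) ρ ?_
  let ρK : G →* Module.End K (Fin n → K) :=
    (Matrix.toLinAlgEquiv' : Matrix (Fin n) (Fin n) K ≃ₐ[K] _).toMonoidHom.comp
      ((algebraMap L K).mapMatrix.toMonoidHom.comp ρ)
  have hK := ρK.span_range_eq_top_of_isAlgClosed fun W hW => hirr W hW
  have hL := congr(Submodule.map
    (LinearMap.toMatrix' (R := K) (n := Fin n) (m := Fin n)).toLinearMap $hK)
  rw [Submodule.map_span, ← Set.range_comp, Submodule.map_top, LinearEquiv.range] at hL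
  have hρK : (LinearMap.toMatrix' ∘ ρK) = fun g => (ρ g).map (algebraMap L K) :=
    funext fun _ => LinearMap.toMatrix'_toLin' _
  rwa [LinearEquiv.coe_coe, hρK] at hL

def MonoidHom.twist {K A G : Type*} [CommSemiring K] [Semiring A] [Algebra K A] [Monoid G]
    (ρ : G →* A) (ε : G →* Kˣ) : G →* A where
  toFun g := (ε g : K) • ρ g
  map_one' := by simp
  map_mul' g h := by simp only [map_mul, Units.val_mul, smul_mul_smul_comm]

theorem MonoidHom.span_range_twist {K A G : Type*} [CommRing K] [Ring A] [Algebra K A]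
    [Monoid G] (ρ : G →* A) (ε : G →* Kˣ) :
    Submodule.span K (Set.range (ρ.twist ε)) = Submodule.span K (Set.range ρ) := by
  apply le_antisymm <;> rw [Submodule.span_le] <;> rintro _ ⟨g, rfl⟩
  · exact Submodule.smul_mem _ _ (Submodule.subset_span ⟨g, rfl⟩)
  · have : ρ g = ((ε g)⁻¹ : Kˣ) • ρ.twist ε g := by
      simp [MonoidHom.twist, Units.smul_def, smul_smul]
    rw [this]
    exact Submodule.smul_mem _ _ (Submodule.subset_span ⟨g, rfl⟩)

theorem Matrix.span_range_map_ringEquiv {K L ι m n : Type*} [Semiring K] [Semiring L]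
    (γ : K ≃+* L) (v : ι → Matrix m n K) (h : Submodule.span K (Set.range v) = ⊤) :
    Submodule.span L (Set.range fun i => (v i).map γ) = ⊤ := by
  have := RingHomInvPair.of_ringEquiv γ
  have := RingHomInvPair.symm (γ : K →+* L) γ.symm
  let Γ := γ.toSemilinearEquiv.toLinearMap.mapMatrix (m := m) (n := n)
  have hΓ : Function.Surjective Γ := fun X => ⟨X.map γ.symm, by ext; simp [Γ]⟩
  have := congr(Submodule.map Γ $h)
  rwa [Submodule.map_span, ← Set.range_comp, Submodule.map_top,
    LinearMap.range_eq_top.2 hΓ] at this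

theorem MonoidAlgebra.lift_surjective_of_span_range_eq_top {K A G : Type*} [CommSemiring K]
    [Semiring A] [Algebra K A] [Monoid G] (ρ : G →* A)
    (h : Submodule.span K (Set.range ρ) = ⊤) :
    Function.Surjective (MonoidAlgebra.lift K A G ρ) := by
  rw [← AlgHom.coe_toLinearMap, ← LinearMap.range_eq_top, eq_top_iff, ← h, Submodule.span_le]
  rintro _ ⟨g, rfl⟩
  exact ⟨MonoidAlgebra.of K G g, by simp⟩

theorem Matrix.exists_isUnit_algEquiv_eq_conj {K n : Type*} [Field K] [Fintype n]
    [DecidableEq n] (φ : Matrix n n K ≃ₐ[K] Matrix n n K) :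
    ∃ M : Matrix n n K, IsUnit M ∧ ∀ X, φ X = M * X * M⁻¹ := by
  let e : Matrix n n K ≃ₐ[K] Module.End K (n → K) := Matrix.toLinAlgEquiv'
  obtain ⟨T, hT⟩ := (e.symm.trans (φ.trans e)).eq_linearEquivConjAlgEquiv
  have hinv : e.symm T * e.symm T.symm = 1 := by
    rw [← map_mul, Module.End.mul_eq_comp, LinearEquiv.comp_coe, T.symm_trans_self,
      LinearEquiv.refl_toLinearMap, ← Module.End.one_eq_id, map_one]
  refine ⟨_, IsUnit.of_mul_eq_one _ hinv, fun X => ?_⟩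
  have := congr(e.symm ($hT (e X)))
  simp only [AlgEquiv.trans_apply, AlgEquiv.symm_apply_apply, LinearEquiv.conjAlgEquiv_apply,
    ← Module.End.mul_eq_comp, map_mul] at this
  rw [this, Matrix.inv_eq_right_inv hinv, Matrix.mul_assoc]

theorem Matrix.exists_algEquiv_apply_eq_of_trace_eq {K A n : Type*} [Field K] [Ring A]
    [Algebra K A] [Fintype n] [DecidableEq n] (f g : A →ₐ[K] Matrix n n K)
    (hf : Function.Surjective f) (hg : Function.Surjective g)
    (htr : ∀ a, trace (f a) = trace (g a)) :
    ∃ φ : Matrix n n K ≃ₐ[K] Matrix n n K, ∀ a, φ (f a) = g a := by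
  have hker : ∀ a ∈ RingHom.ker f, g a = 0 := by
    intro a ha
    rw [Matrix.ext_iff_trace_mul_right]
    intro Y
    obtain ⟨b, rfl⟩ := hg Y
    rw [← map_mul, ← htr, map_mul, RingHom.mem_ker.1 ha]
    simp
  let ψ := (Ideal.Quotient.liftₐ _ g hker).comp
    (Ideal.quotientKerAlgEquivOfSurjective hf).symm.toAlgHom
  have hψ : ∀ a, ψ (f a) = g a := fun a => by simp [ψ, Ideal.Quotient.liftₐ_apply]; rfl
  have hsurj : Function.Surjective ψ := fun Y => by
    obtain ⟨a, rfl⟩ := hg Y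
    exact ⟨f a, hψ a⟩
  have hinj : Function.Injective ψ :=
    LinearMap.injective_iff_surjective (f := ψ.toLinearMap) |>.2 hsurj
  exact ⟨AlgEquiv.ofBijective ψ ⟨hinj, hsurj⟩, hψ⟩

theorem Matrix.exists_isUnit_conj_of_trace_eq {K G n : Type*} [Field K] [Monoid G] [Fintype n]
    [DecidableEq n] (σ τ : G →* Matrix n n K)
    (hσ : Submodule.span K (Set.range σ) = ⊤) (hτ : Submodule.span K (Set.range τ) = ⊤)
    (htr : ∀ g, trace (σ g) = trace (τ g)) :
    ∃ M : Matrix n n K, IsUnit M ∧ ∀ g, σ g = M * τ g * M⁻¹ := by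
  obtain ⟨φ, hφ⟩ := Matrix.exists_algEquiv_apply_eq_of_trace_eq
    (MonoidAlgebra.lift K _ G τ) (MonoidAlgebra.lift K _ G σ)
    (MonoidAlgebra.lift_surjective_of_span_range_eq_top τ hτ)
    (MonoidAlgebra.lift_surjective_of_span_range_eq_top σ hσ)
    (fun a => by simp [MonoidAlgebra.lift_apply, Finsupp.sum, trace_sum, htr])
  obtain ⟨M, hM, hconj⟩ := Matrix.exists_isUnit_algEquiv_eq_conj φ
  refine ⟨M, hM, fun g => ?_⟩
  simpa [hconj] using (hφ (MonoidAlgebra.of K G g)).symm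

/-- For an absolutely irreducible representation `ρ`, a field automorphism `γ` and a
character `ε`, the twisted conjugate `γ∘ρ` is equivalent to `ρ ⊗ ε` if and only if
`γ(Tr ρ(g)) = Tr(ρ(g))·ε(g)` for all `g`. -/
theorem twist_equiv_iff_trace_relation
    {G : Type*} [Group G] {L : Type*} [Field L] {n : ℕ}
    (ρ : G →* Matrix (Fin n) (Fin n) L)
    (hirr : MatAbsIrred n L (fun g => ρ g))
    (γ : L ≃+* L) (ε : G →* Lˣ) :
    (∃ M : Matrix (Fin n) (Fin n) L, IsUnit M ∧
        ∀ g, (ρ g).map ⇑γ = M * ((ε g : L) • ρ g) * M⁻¹)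
      ↔ ∀ g, γ ((ρ g).trace) = (ρ g).trace * (ε g : L) := by
  constructor
  · rintro ⟨_, ⟨U, rfl⟩, hconj⟩ g
    rw [AddMonoidHom.map_trace, hconj, ← Matrix.coe_units_inv, trace_units_conj, trace_smul,
      smul_eq_mul, mul_comm]
  · intro htr
    have hρ := span_range_eq_top_of_matAbsIrred ρ hirr
    exact Matrix.exists_isUnit_conj_of_trace_eq ((γ : L →+* L).mapMatrix.toMonoidHom.comp ρ)
      (ρ.twist ε) (Matrix.span_range_map_ringEquiv γ ρ hρ) (by rw [ρ.span_range_twist, hρ])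
      fun g => by simp [MonoidHom.twist, ← AddMonoidHom.map_trace, htr, mul_comm]
end
end

section
/- Let L/K be a Galois field extension (possibly infinite) with Galois group Γ = Gal(L/K) carrying the Krull topology, let G be a group, and let ρ: G → GL_n(L) be a representation such that all entries of all matrices ρ(g), g ∈ G, lie in a single finite subextension of L/K. Then the subsets Γ_[ρ] := {γ ∈ Γ : there exists a character ε: G → L^× with γ∘ρ equivalent to ρ ⊗ ε} and Δ_[ρ] := {γ ∈ Γ : γ∘ρ is equivalent to ρ} are open subgroups of Γ (hence of finite index). -/
open Matrix

noncomputable section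

/-- Equivalence of matrix representations: conjugacy by an invertible matrix. -/
def GLEquiv {G : Type*} (n : ℕ) (L : Type*) [Field L]
    (ρ ρ' : G → Matrix (Fin n) (Fin n) L) : Prop :=
  ∃ M : Matrix (Fin n) (Fin n) L, IsUnit M ∧ ∀ g, ρ' g = M * ρ g * M⁻¹

/-! Both subgroups are stabilizers of the class of `ρ` for an equivalence relation on
representations that is compatible with the Galois action (for twists because
`γ ∘ (ρ ⊗ ε) = (γ ∘ ρ) ⊗ (γ ∘ ε)`), so they are subgroups; they contain
the pointwise stabilizer of `ρ`, which contains the fixing subgroup of the finite extension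
generated by the entries of `ρ`, so they are open of finite index. -/

def Setoid.stabilizer {Γ X : Type*} [Group Γ] [MulAction Γ X] (r : Setoid X)
    (hr : ∀ (γ : Γ) x y, r x y → r (γ • x) (γ • y)) (x : X) : Subgroup Γ where
  carrier := {γ | r x (γ • x)}
  one_mem' := by simpa only [Set.mem_ofPred_eq, one_smul] using r.refl x
  mul_mem' {a b} ha hb := by
    simpa only [Set.mem_ofPred_eq, mul_smul] using r.trans ha (hr a _ _ hb)
  inv_mem' {a} ha := by
    simpa only [Set.mem_ofPred_eq, inv_smul_smul] using r.symm (hr a⁻¹ _ _ ha)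

theorem MulAction.stabilizer_le_setoidStabilizer {Γ X : Type*} [Group Γ] [MulAction Γ X]
    (r : Setoid X) (hr : ∀ (γ : Γ) x y, r x y → r (γ • x) (γ • y)) (x : X) :
    MulAction.stabilizer Γ x ≤ r.stabilizer hr x := fun γ hγ => by
  rw [MulAction.mem_stabilizer_iff] at hγ
  change r x (γ • x)
  rw [hγ]

namespace GLEquiv

variable {G : Type*} {n : ℕ} {L : Type*} [Field L]

theorem refl (ρ : G → Matrix (Fin n) (Fin n) L) : GLEquiv n L ρ ρ :=
  ⟨1, isUnit_one, fun g => by simp⟩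

theorem symm {ρ ρ' : G → Matrix (Fin n) (Fin n) L} (h : GLEquiv n L ρ ρ') :
    GLEquiv n L ρ' ρ := by
  obtain ⟨M, hM, h⟩ := h
  have hM' : IsUnit M.det := (Matrix.isUnit_iff_isUnit_det M).mp hM
  refine ⟨M⁻¹, Matrix.isUnit_nonsing_inv_iff.mpr hM, fun g => ?_⟩
  rw [h g, Matrix.nonsing_inv_nonsing_inv M hM']
  simp only [Matrix.mul_assoc, Matrix.nonsing_inv_mul_cancel_left _ _ hM',
    Matrix.nonsing_inv_mul _ hM', Matrix.mul_one]

theorem trans {ρ₁ ρ₂ ρ₃ : G → Matrix (Fin n) (Fin n) L}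
    (h₁ : GLEquiv n L ρ₁ ρ₂) (h₂ : GLEquiv n L ρ₂ ρ₃) : GLEquiv n L ρ₁ ρ₃ := by
  obtain ⟨M, hM, h₁⟩ := h₁
  obtain ⟨N, hN, h₂⟩ := h₂
  refine ⟨N * M, hN.mul hM, fun g => ?_⟩
  rw [h₂, h₁, Matrix.mul_inv_rev]
  simp only [Matrix.mul_assoc]

theorem map {L' : Type*} [Field L'] (f : L →+* L') {ρ ρ' : G → Matrix (Fin n) (Fin n) L}
    (h : GLEquiv n L ρ ρ') :
    GLEquiv n L' (fun g => (ρ g).map f) (fun g => (ρ' g).map f) := by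
  obtain ⟨M, hM, h⟩ := h
  have hM' : IsUnit M.det := (Matrix.isUnit_iff_isUnit_det M).mp hM
  have hinv : (f.mapMatrix M)⁻¹ = f.mapMatrix M⁻¹ :=
    Matrix.inv_eq_right_inv (by rw [← map_mul, Matrix.mul_nonsing_inv _ hM', map_one])
  refine ⟨M.map f, hM.map f.mapMatrix, fun g => ?_⟩
  change f.mapMatrix (ρ' g) = f.mapMatrix M * f.mapMatrix (ρ g) * (f.mapMatrix M)⁻¹
  rw [hinv, ← map_mul, ← map_mul, h g]

theorem twist (c : G → L) {ρ ρ' : G → Matrix (Fin n) (Fin n) L} (h : GLEquiv n L ρ ρ') :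
    GLEquiv n L (fun g => c g • ρ g) (fun g => c g • ρ' g) := by
  obtain ⟨M, hM, h⟩ := h
  exact ⟨M, hM, fun g => by simp only [h g, Matrix.mul_smul, Matrix.smul_mul]⟩

theorem smul {M : Type*} [Monoid M] [MulSemiringAction M L] (m : M)
    {ρ ρ' : G → Matrix (Fin n) (Fin n) L} (h : GLEquiv n L ρ ρ') :
    GLEquiv n L (m • ρ) (m • ρ') :=
  h.map (MulSemiringAction.toRingHom M L m)

variable (G n L) in
def setoid : Setoid (G → Matrix (Fin n) (Fin n) L) :=
  ⟨GLEquiv n L, ⟨refl, symm, trans⟩⟩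

end GLEquiv

def IsTwistEquiv {G : Type*} [MulOneClass G] {n : ℕ} {L : Type*} [Field L]
    (ρ ρ' : G → Matrix (Fin n) (Fin n) L) : Prop :=
  ∃ ε : G →* Lˣ, GLEquiv n L (fun g => (ε g : L) • ρ g) ρ'

namespace IsTwistEquiv

variable {G : Type*} [MulOneClass G] {n : ℕ} {L : Type*} [Field L]

theorem refl (ρ : G → Matrix (Fin n) (Fin n) L) : IsTwistEquiv ρ ρ :=
  ⟨1, by simpa only [MonoidHom.one_apply, Units.val_one, one_smul] using GLEquiv.refl ρ⟩

theorem symm {ρ ρ' : G → Matrix (Fin n) (Fin n) L} (h : IsTwistEquiv ρ ρ') :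
    IsTwistEquiv ρ' ρ := by
  obtain ⟨ε, h⟩ := h
  refine ⟨ε⁻¹, ?_⟩
  simpa [smul_smul] using (h.twist fun g => ((ε⁻¹ g : Lˣ) : L)).symm

theorem trans {ρ₁ ρ₂ ρ₃ : G → Matrix (Fin n) (Fin n) L}
    (h₁ : IsTwistEquiv ρ₁ ρ₂) (h₂ : IsTwistEquiv ρ₂ ρ₃) : IsTwistEquiv ρ₁ ρ₃ := by
  obtain ⟨ε₁, h₁⟩ := h₁
  obtain ⟨ε₂, h₂⟩ := h₂
  refine ⟨ε₂ * ε₁, ?_⟩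
  simpa only [MonoidHom.mul_apply, Units.val_mul, smul_smul] using (h₁.twist fun g => (ε₂ g : L)).trans h₂

theorem smul {M : Type*} [Monoid M] [MulSemiringAction M L] (m : M)
    {ρ ρ' : G → Matrix (Fin n) (Fin n) L} (h : IsTwistEquiv ρ ρ') :
    IsTwistEquiv (m • ρ) (m • ρ') := by
  obtain ⟨ε, h⟩ := h
  refine ⟨(Units.map (MulSemiringAction.toRingHom M L m : L →* L)).comp ε, ?_⟩
  convert h.smul m using 1
  ext g i j
  simp [smul_mul']

variable (G n L) in
def setoid : Setoid (G → Matrix (Fin n) (Fin n) L) :=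
  ⟨IsTwistEquiv, ⟨refl, symm, trans⟩⟩

end IsTwistEquiv

section Galois

variable {K L : Type*} [Field K] [Field L] [Algebra K L]

theorem IntermediateField.fixingSubgroup_le_stabilizer {G : Type*} {n : ℕ}
    {E : IntermediateField K L} {ρ : G → Matrix (Fin n) (Fin n) L} (hρ : ∀ g i j, ρ g i j ∈ E) :
    E.fixingSubgroup ≤ MulAction.stabilizer Gal(L/K) ρ := fun γ hγ => by
  ext g i j
  exact (E.mem_fixingSubgroup_iff γ).mp hγ _ (hρ g i j)

theorem IntermediateField.finiteIndex_fixingSubgroup [IsGalois K L]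
    (E : IntermediateField K L) [FiniteDimensional K E] : E.fixingSubgroup.FiniteIndex :=
  ⟨by rw [← E.finrank_eq_fixingSubgroup_index]; exact Module.finrank_pos.ne'⟩

theorem isOpen_and_finiteIndex_of_stabilizer_le [IsGalois K L] {G : Type*} {n : ℕ}
    {ρ : G → Matrix (Fin n) (Fin n) L}
    (hfin : ∃ E : IntermediateField K L, FiniteDimensional K E ∧ ∀ g i j, ρ g i j ∈ E)
    {H : Subgroup Gal(L/K)} (hH : MulAction.stabilizer Gal(L/K) ρ ≤ H) :
    IsOpen (H : Set Gal(L/K)) ∧ H.FiniteIndex := by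
  obtain ⟨E, hE, hρE⟩ := hfin
  have hEH := (IntermediateField.fixingSubgroup_le_stabilizer hρE).trans hH
  have := E.finiteIndex_fixingSubgroup
  exact ⟨Subgroup.isOpen_mono hEH E.fixingSubgroup_isOpen, Subgroup.finiteIndex_of_le hEH⟩

end Galois

/-- For a representation `ρ : G → GL_n(L)` whose matrix entries all lie in a single
finite subextension of the Galois extension `L/K`, the sets
`Γ_[ρ] = {γ : γ∘ρ ~ ρ ⊗ ε for some character ε}` and `Δ_[ρ] = {γ : γ∘ρ ~ ρ}` are
open subgroups of `Gal(L/K)` with the Krull topology (hence of finite index). -/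
theorem inner_twist_groups_open
    {K L : Type*} [Field K] [Field L] [Algebra K L] [IsGalois K L]
    {G : Type*} [Group G] {n : ℕ}
    (ρ : G →* Matrix (Fin n) (Fin n) L)
    (hfin : ∃ E : IntermediateField K L, FiniteDimensional K E ∧
      ∀ g i j, ρ g i j ∈ E) :
    (∃ H : Subgroup (L ≃ₐ[K] L),
        (H : Set (L ≃ₐ[K] L)) =
          {γ : L ≃ₐ[K] L | ∃ ε : G →* Lˣ,
            GLEquiv n L (fun g => (ε g : L) • ρ g) (fun g => (ρ g).map ⇑γ)} ∧
        IsOpen (H : Set (L ≃ₐ[K] L)) ∧ H.FiniteIndex) ∧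
    (∃ H : Subgroup (L ≃ₐ[K] L),
        (H : Set (L ≃ₐ[K] L)) =
          {γ : L ≃ₐ[K] L | GLEquiv n L (fun g => ρ g) (fun g => (ρ g).map ⇑γ)} ∧
        IsOpen (H : Set (L ≃ₐ[K] L)) ∧ H.FiniteIndex) :=
  ⟨⟨(IsTwistEquiv.setoid G n L).stabilizer (fun γ _ _ h => h.smul γ) ρ, rfl,
      isOpen_and_finiteIndex_of_stabilizer_le hfin
        (MulAction.stabilizer_le_setoidStabilizer _ _ _)⟩,
    ⟨(GLEquiv.setoid G n L).stabilizer (fun γ _ _ h => h.smul γ) ρ, rfl,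
      isOpen_and_finiteIndex_of_stabilizer_le hfin
        (MulAction.stabilizer_le_setoidStabilizer _ _ _)⟩⟩
end
end

section
/- Let L/K be an extension of fields, n ≥ 2 even, G a group, ρ: G → GSp_n(L) a homomorphism, χ: G → K^× any character, and ψ: G → L^× a character of finite order such that the multiplier satisfies m∘ρ = ψ·χ. Let γ ∈ Aut(L/K) and let ε: G → L^× be a character such that γ∘ρ is symplectically equivalent to ρ ⊗ ε. Then ε(g)² = γ(ψ(g))·ψ(g)⁻¹ for all g ∈ G, and all values of ε lie in the subfield of L generated over K by the values of ψ. -/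
/-!
Conjugation by a similitude preserves multipliers, so comparing the multipliers of `γ ∘ ρ` and
`ρ ⊗ ε` gives `γ(ψ χ) = ε² ψ χ`; as `γ` fixes the values of `χ`, `ε² = γ(ψ) / ψ`. Since `ψ(g)` is a
root of unity of some order `m`, `γ(ψ(g)) = ψ(g)^i` with `i` prime to `m`. Then `i` and `m` are not
both even, so `ψ(g)^(i-1)` is the square of a power of `ψ(g)`, and `ε(g)` is plus or minus that
power.
-/

open Matrix

noncomputable section

namespace Matrix

variable {n R : Type*} [Fintype n] [CommRing R]

def IsSimilitude (J A : Matrix n n R) (c : R) : Prop :=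
  Aᵀ * J * A = c • J

namespace IsSimilitude

variable {J A B : Matrix n n R} {a b c : R}

theorem mul (hA : IsSimilitude J A a) (hB : IsSimilitude J B b) :
    IsSimilitude J (A * B) (a * b) :=
  calc (A * B)ᵀ * J * (A * B) = Bᵀ * (Aᵀ * J * A) * B := by
        simp only [transpose_mul, Matrix.mul_assoc]
    _ = (a * b) • J := by
        rw [hA, Matrix.mul_smul, Matrix.smul_mul, hB, smul_smul, mul_comm]

theorem smul (hA : IsSimilitude J A a) (e : R) : IsSimilitude J (e • A) (e ^ 2 * a) := by
  rw [IsSimilitude, transpose_smul, Matrix.smul_mul, Matrix.smul_mul, Matrix.mul_smul, hA,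
    smul_smul, smul_smul, sq, mul_assoc]

theorem map {S F : Type*} [CommRing S] [FunLike F R S] [RingHomClass F R S]
    (hA : IsSimilitude J A c) (f : F) : IsSimilitude (J.map f) (A.map f) (f c) := by
  rw [IsSimilitude, ← transpose_map, ← Matrix.map_mul, ← Matrix.map_mul, hA,
    map_smul' _ _ _ (map_mul f)]

theorem unique [IsDomain R] {d : R} (hJ : J ≠ 0) (hc : IsSimilitude J A c)
    (hd : IsSimilitude J A d) : c = d :=
  smul_left_injective R hJ (hc.symm.trans hd)

variable [DecidableEq n] {M : Matrix n n R} {α : Rˣ}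

theorem nonsing_inv (hM : IsSimilitude J M α) (hdet : IsUnit M.det) :
    IsSimilitude J M⁻¹ ↑α⁻¹ :=
  calc M⁻¹ᵀ * J * M⁻¹ = ((α⁻¹ : Rˣ) : R) • (M⁻¹ᵀ * (Mᵀ * J * M) * M⁻¹) := by
        rw [hM, Matrix.mul_smul, Matrix.smul_mul, smul_smul, Units.inv_mul, one_smul]
    _ = ((α⁻¹ : Rˣ) : R) • ((M * M⁻¹)ᵀ * J * (M * M⁻¹)) := by
        simp only [transpose_mul, Matrix.mul_assoc]
    _ = ((α⁻¹ : Rˣ) : R) • J := by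
        rw [mul_nonsing_inv M hdet, transpose_one, Matrix.one_mul, Matrix.mul_one]

theorem conj (hM : IsSimilitude J M α) (hdet : IsUnit M.det) (hA : IsSimilitude J A c) :
    IsSimilitude J (M * A * M⁻¹) c := by
  simpa [mul_comm (α : R), mul_assoc] using (hM.mul hA).mul (hM.nonsing_inv hdet)

end IsSimilitude

end Matrix

theorem stdJ_map {n : ℕ} {R S F : Type*} [CommRing R] [CommRing S] [FunLike F R S]
    [RingHomClass F R S] (f : F) : (stdJ n R).map f = stdJ n S := by
  ext i j
  simp only [stdJ, map_apply, of_apply]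
  split_ifs <;> simp

theorem stdJ_ne_zero {n : ℕ} (R : Type*) [CommRing R] [Nontrivial R] (hn : 0 < n) :
    stdJ n R ≠ 0 := by
  intro h
  have h0 := congr_fun₂ h ⟨0, hn⟩ ⟨n / 2, by omega⟩
  simp [stdJ] at h0

theorem IsPrimitiveRoot.exists_map_mul_inv_eq_zpow_sq {L F : Type*} [Field L] [FunLike F L L]
    [RingHomClass F L L] {z : L} {m : ℕ} (hz : IsPrimitiveRoot z m) (hm : 0 < m) (σ : F) :
    ∃ k : ℤ, σ z * z⁻¹ = (z ^ k) ^ 2 := by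
  have : NeZero m := ⟨hm.ne'⟩
  have hz0 : z ≠ 0 := hz.ne_zero hm.ne'
  obtain ⟨i, -, hi⟩ :=
    hz.eq_pow_of_pow_eq_one (ξ := σ z) (by rw [← map_pow, hz.pow_eq_one, map_one])
  have hcop : i.Coprime m :=
    (hz.pow_iff_coprime hm i).mp (hi ▸ hz.map_of_injective (RingHom.injective (σ : L →+* L)))
  have hnot_even : ¬(2 ∣ i ∧ 2 ∣ m) := fun ⟨hi2, hm2⟩ => by
    have := Nat.dvd_gcd hi2 hm2
    rw [hcop] at this
    omega
  obtain ⟨j, k, hjk⟩ : ∃ j k : ℤ, (i : ℤ) - 1 + m * j = k + k := by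
    rcases Nat.even_or_odd i with ⟨r, hr⟩ | ⟨r, hr⟩
    · exact ⟨1, r + (m - 1) / 2, by omega⟩
    · exact ⟨0, r, by omega⟩
  refine ⟨k, ?_⟩
  calc σ z * z⁻¹ = z ^ ((i : ℤ) - 1 + m * j) := by
        rw [zpow_add₀ hz0, _root_.zpow_mul, zpow_natCast, hz.pow_eq_one, _root_.one_zpow, mul_one,
          zpow_sub_one₀ hz0, zpow_natCast, hi]
    _ = (z ^ k) ^ 2 := by rw [hjk, zpow_add₀ hz0, sq]

theorem epsilon_sq_eq_gamma_psi_div_psi_general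
    {K L : Type*} [Field K] [Field L] [Algebra K L]
    {G : Type*} [Group G] {n : ℕ} (hn2 : 2 ≤ n)
    (ρ : G →* Matrix (Fin n) (Fin n) L)
    (χ : G →* Kˣ) (ψ : G →* Lˣ) (hψ : IsOfFinOrder ψ)
    (hmult : ∀ g, (ρ g)ᵀ * stdJ n L * ρ g
      = ((ψ g : L) * algebraMap K L (χ g)) • stdJ n L)
    (γ : L ≃ₐ[K] L) (ε : G →* Lˣ)
    (hequiv : ∃ M : Matrix (Fin n) (Fin n) L, IsGSp n L M ∧
      ∀ g, (ρ g).map ⇑γ = M * ((ε g : L) • ρ g) * M⁻¹) :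
    ∀ g, (ε g : L) ^ 2 = γ (ψ g : L) * (ψ g : L)⁻¹ ∧
      (ε g : L) ∈
        IntermediateField.adjoin K (Set.range fun h : G => (ψ h : L)) := by
  obtain ⟨M, ⟨hM, α, hMα⟩, hMρ⟩ := hequiv
  intro g
  set c := (ψ g : L) * algebraMap K L (χ g)
  have hρ : IsSimilitude (stdJ n L) (ρ g) c := hmult g
  have hγρ : IsSimilitude (stdJ n L) ((ρ g).map γ) (γ c) := stdJ_map γ ▸ hρ.map γ
  have hερ : IsSimilitude (stdJ n L) ((ρ g).map γ) ((ε g : L) ^ 2 * c) :=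
    hMρ g ▸ IsSimilitude.conj hMα ((isUnit_iff_isUnit_det M).mp hM) (hρ.smul _)
  have hψγ : γ (ψ g : L) = (ε g : L) ^ 2 * ψ g := by
    have h := hγρ.unique (stdJ_ne_zero L (by omega)) hερ
    rw [map_mul, AlgEquiv.commutes, ← mul_assoc] at h
    exact mul_right_cancel₀ (by simp) h
  have hsq : (ε g : L) ^ 2 = γ (ψ g : L) * (ψ g : L)⁻¹ := by
    rw [hψγ, mul_inv_cancel_right₀ (ψ g).ne_zero]
  refine ⟨hsq, ?_⟩
  have hψg := (MonoidHom.eval g).isOfFinOrder hψ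
  obtain ⟨k, hk⟩ := (IsPrimitiveRoot.coe_units_iff.mpr (IsPrimitiveRoot.orderOf (ψ g)))
    |>.exists_map_mul_inv_eq_zpow_sq hψg.orderOf_pos γ
  have hψF : (ψ g : L) ∈ IntermediateField.adjoin K (Set.range fun h : G => (ψ h : L)) :=
    IntermediateField.subset_adjoin K _ ⟨g, rfl⟩
  rcases sq_eq_sq_iff_eq_or_eq_neg.mp (hsq.trans hk) with h | h <;> rw [h]
  · exact zpow_mem hψF k
  · exact neg_mem (zpow_mem hψF k)

/-- For a symplectic representation `ρ` with multiplier `m∘ρ = ψ·χ` (`χ` valued in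
`K^×`, `ψ` of finite order), `γ ∈ Aut(L/K)` and a character `ε` such that `γ∘ρ` is
symplectically equivalent to `ρ ⊗ ε`, one has `ε(g)² = γ(ψ(g))·ψ(g)⁻¹`, and the values
of `ε` lie in the subfield of `L` generated over `K` by the values of `ψ`. -/
theorem epsilon_sq_eq_gamma_psi_div_psi
    {K L : Type*} [Field K] [Field L] [Algebra K L]
    {G : Type*} [Group G] {n : ℕ} (hn2 : 2 ≤ n) (hneven : Even n)
    (ρ : G →* Matrix (Fin n) (Fin n) L)
    (hρGSp : ∀ g, IsGSp n L (ρ g))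
    (χ : G →* Kˣ) (ψ : G →* Lˣ) (hψ : IsOfFinOrder ψ)
    (hmult : ∀ g, (ρ g)ᵀ * stdJ n L * ρ g
      = ((ψ g : L) * algebraMap K L (χ g)) • stdJ n L)
    (γ : L ≃ₐ[K] L) (ε : G →* Lˣ)
    (hequiv : ∃ M : Matrix (Fin n) (Fin n) L, IsGSp n L M ∧
      ∀ g, (ρ g).map ⇑γ = M * ((ε g : L) • ρ g) * M⁻¹) :
    ∀ g, (ε g : L) ^ 2 = γ (ψ g : L) * (ψ g : L)⁻¹ ∧
      (ε g : L) ∈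
        IntermediateField.adjoin K (Set.range fun h : G => (ψ h : L)) :=
  epsilon_sq_eq_gamma_psi_div_psi_general hn2 ρ χ ψ hψ hmult γ ε hequiv
end
end

section
/- Let L be a field, G a group, ρ: G → GL_n(L) a representation, and ε: G → L^× a character such that ρ ⊗ ε is equivalent to ρ. For g ∈ G write the characteristic polynomial of ρ(g) as X^n + Σ_{i=1}^n a_i(g) X^{n−i}. Then: (a) ε(g)^n = 1 for every g ∈ G (so the order of ε divides n); and (b) for every g ∈ G and every i ∈ {1, …, n} with a_i(g) ≠ 0 one has ε(g)^i = 1. -/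
/-!
Conjugate matrices have the same determinant and characteristic polynomial. Scaling an
`n × n` matrix by `c` multiplies its determinant by `c ^ n`, and since
`det (c X - c A) = c ^ n det (X - A)`, it multiplies the coefficient of `X ^ k` of the
characteristic polynomial by `c ^ (n - k)`. Applied to `ρ g` and `ε g • ρ g`, which are
conjugate, and cancelling the nonzero factors `det (ρ g)` and `a_i(g)`, this gives both claims.
-/

open Matrix Polynomial

namespace Matrix

variable {n R : Type*} [Fintype n] [DecidableEq n]

theorem charpoly_smul_comp_C_mul_X [CommRing R] (c : R) (A : Matrix n n R) :
    (c • A).charpoly.comp (C c * X) = C c ^ Fintype.card n * A.charpoly := by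
  have hcharmatrix : (compRingHom (C c * X)).mapMatrix (c • A).charmatrix =
      C c • A.charmatrix := by
    ext i j
    by_cases hij : i = j
    · subst hij; simp [mul_sub]
    · simp [charmatrix_apply_ne _ _ _ hij]
  rw [charpoly, ← coe_compRingHom_apply, RingHom.map_det, hcharmatrix, det_smul, charpoly]

theorem coeff_charpoly_smul_mul_pow [CommRing R] (c : R) (A : Matrix n n R) (k : ℕ) :
    (c • A).charpoly.coeff k * c ^ k = c ^ Fintype.card n * A.charpoly.coeff k := by
  rw [← comp_C_mul_X_coeff, charpoly_smul_comp_C_mul_X, ← C_pow, coeff_C_mul]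

variable [CommRing R] [IsDomain R]

theorem pow_card_eq_one_of_det_smul_eq {c : R} {A : Matrix n n R} (hA : A.det ≠ 0)
    (h : (c • A).det = A.det) : c ^ Fintype.card n = 1 :=
  mul_right_cancel₀ hA (by rw [← det_smul, h, one_mul])

theorem pow_eq_one_of_charpoly_smul_eq {c : R} {A : Matrix n n R} (hc : c ≠ 0)
    (h : (c • A).charpoly = A.charpoly) {i : ℕ} (hi : i ≤ Fintype.card n)
    (hcoeff : A.charpoly.coeff (Fintype.card n - i) ≠ 0) : c ^ i = 1 := by
  obtain ⟨m, hm⟩ : ∃ m, Fintype.card n = m + i := ⟨_, (Nat.sub_add_cancel hi).symm⟩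
  rw [hm, Nat.add_sub_cancel] at hcoeff
  have hfixed : c ^ m * (c ^ i * A.charpoly.coeff m) = c ^ m * A.charpoly.coeff m := by
    rw [← mul_assoc, ← pow_add, ← hm, ← coeff_charpoly_smul_mul_pow, h, mul_comm]
  exact (mul_eq_right₀ hcoeff).mp (mul_left_cancel₀ (pow_ne_zero _ hc) hfixed)

end Matrix

/-- If `ρ ⊗ ε` is equivalent to `ρ`, then (a) `ε(g)^n = 1` for all `g` and (b) whenever
the coefficient `a_i(g)` of `X^{n-i}` in the characteristic polynomial of `ρ(g)` is
nonzero, `ε(g)^i = 1`. -/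
theorem self_twist_epsilon_order
    {G : Type*} [Group G] {L : Type*} [Field L] {n : ℕ}
    (ρ : G →* Matrix (Fin n) (Fin n) L) (ε : G →* Lˣ)
    (hequiv : ∃ M : Matrix (Fin n) (Fin n) L, IsUnit M ∧
      ∀ g, (ε g : L) • ρ g = M * ρ g * M⁻¹) :
    ∀ g : G, (ε g : L) ^ n = 1 ∧
      ∀ i : ℕ, 1 ≤ i → i ≤ n → (ρ g).charpoly.coeff (n - i) ≠ 0 →
        (ε g : L) ^ i = 1 := by
  obtain ⟨_, ⟨U, rfl⟩, hconj⟩ := hequiv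
  intro g
  have hdet : (ρ g).det ≠ 0 :=
    ((isUnit_iff_isUnit_det _).mp ((Group.isUnit g).map ρ)).ne_zero
  refine ⟨?_, fun i _ hi hcoeff => ?_⟩
  · simpa using
      pow_card_eq_one_of_det_smul_eq hdet (by rw [hconj, ← coe_units_inv, det_units_conj])
  · exact pow_eq_one_of_charpoly_smul_eq (ε g).ne_zero (by rw [hconj, charpoly_units_conj])
      (by simpa using hi) (by simpa using hcoeff)
end

section
/- Let L/K be a finite Galois extension of fields, G a group, and ρ: G → GL_n(L) a representation such that for every γ ∈ Gal(L/K) there exists a character ε_γ: G → L^× with γ∘ρ = ρ ⊗ ε_γ (equality of maps, γ applied entrywise). Then for every g ∈ G there exists a scalar a_g ∈ L^× such that all entries of the matrix a_g·ρ(g) lie in K; in particular the projective representation ρ^proj: G → PGL_n(L) (composition of ρ with the quotient GL_n(L) → GL_n(L)/L^×) takes its values in the image of GL_n(K), i.e. factors through PGL_n(K). -/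
/- Normalise `ρ g` by one of its nonzero entries. Every `γ` rescales all entries of `ρ g` by the
same factor `ε_γ g`, so it fixes the ratio of any two of them; a Galois-fixed element lies in `K`. -/

theorem map_div_eq_div_of_map_eq_mul {G₀ F : Type*} [CommGroupWithZero G₀] [FunLike F G₀ G₀]
    [MonoidWithZeroHomClass F G₀ G₀] (γ : F) {c x y : G₀} (hc : c ≠ 0)
    (hx : γ x = c * x) (hy : γ y = c * y) : γ (x / y) = x / y := by
  rw [map_div₀, hx, hy, mul_div_mul_left _ _ hc]

theorem Matrix.exists_apply_ne_zero {m n α : Type*} [Zero α] {M : Matrix m n α} (hM : M ≠ 0) :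
    ∃ i j, M i j ≠ 0 := by
  by_contra! h
  exact hM (Matrix.ext h)

theorem proj_rep_defined_over_base_general
    {K L : Type*} [Field K] [Field L] [Algebra K L]
    [IsGalois K L]
    {G : Type*} [Group G] {n : ℕ}
    (ρ : G →* Matrix (Fin n) (Fin n) L)
    (htwist : ∀ γ : L ≃ₐ[K] L, ∃ ε : G →* Lˣ,
      ∀ g, (ρ g).map ⇑γ = (ε g : L) • ρ g) :
    ∀ g : G, ∃ a : Lˣ, ∀ i j, ∃ k : K,
      algebraMap K L k = (a : L) * ρ g i j := by
  intro g
  cases isEmpty_or_nonempty (Fin n)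
  · exact ⟨1, fun i => isEmptyElim i⟩
  obtain ⟨i₀, j₀, hpivot⟩ :=
    Matrix.exists_apply_ne_zero ((Group.isUnit g).map ρ).ne_zero
  refine ⟨(Units.mk0 _ hpivot)⁻¹, fun i j => ?_⟩
  rw [Units.val_inv_eq_inv_val, Units.val_mk0, ← div_eq_inv_mul]
  refine (InfiniteGalois.mem_range_algebraMap_iff_fixed _).mpr fun γ => ?_
  obtain ⟨ε, hε⟩ := htwist γ
  have hentry : ∀ i j, γ (ρ g i j) = ε g * ρ g i j := fun i j =>
    congrFun (congrFun (hε g) i) j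
  exact map_div_eq_div_of_map_eq_mul γ (ε g).ne_zero (hentry i j) (hentry i₀ j₀)

/-- (Hilbert 90 application.) If for every `γ ∈ Gal(L/K)` there is a character
`ε_γ` with `γ∘ρ = ρ ⊗ ε_γ`, then each `ρ(g)` can be scaled by some `a_g ∈ L^×` so
that all entries lie in `K`; in particular the projective representation factors
through `PGL_n(K)`. -/
theorem proj_rep_defined_over_base
    {K L : Type*} [Field K] [Field L] [Algebra K L]
    [FiniteDimensional K L] [IsGalois K L]
    {G : Type*} [Group G] {n : ℕ}
    (ρ : G →* Matrix (Fin n) (Fin n) L)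
    (htwist : ∀ γ : L ≃ₐ[K] L, ∃ ε : G →* Lˣ,
      ∀ g, (ρ g).map ⇑γ = (ε g : L) • ρ g) :
    ∀ g : G, ∃ a : Lˣ, ∀ i j, ∃ k : K,
      algebraMap K L k = (a : L) * ρ g i j :=
  proj_rep_defined_over_base_general ρ htwist
end

section
/- Let K be a field, K̄ an algebraic closure of K, n ≥ 2 an even integer, and G a subgroup of GSp_n(K̄) such that the subgroup of G generated by the transvections contained in G equals Sp_n(K). Then G is contained in the normaliser of Sp_n(K) in GSp_n(K̄): for every A ∈ G one has A·Sp_n(K)·A⁻¹ = Sp_n(K). -/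
open Matrix

noncomputable section

/-- A transvection: a matrix `T ≠ 1` such that `T - 1` has rank `1`. -/
def IsTransvection {n : ℕ} {R : Type*} [CommRing R]
    (A : Matrix (Fin n) (Fin n) R) : Prop :=
  A ≠ 1 ∧ (A - 1).rank = 1

/-- `Sp_n(K)` viewed inside `GL_n(K̄)`: invertible matrices with entries in (the image
of) `K` satisfying `AᵀJA = J`. -/
def SpOver (K : Type*) [Field K] (n : ℕ) :
    Set (Matrix (Fin n) (Fin n) (AlgebraicClosure K))ˣ :=
  {A | (∀ i j, ∃ b : K, algebraMap K (AlgebraicClosure K) b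
          = (A : Matrix (Fin n) (Fin n) (AlgebraicClosure K)) i j) ∧
    (A : Matrix (Fin n) (Fin n) (AlgebraicClosure K))ᵀ * stdJ n (AlgebraicClosure K)
      * (A : Matrix (Fin n) (Fin n) (AlgebraicClosure K))
      = stdJ n (AlgebraicClosure K)}

/-- Conjugation preserves the property of being a transvection. -/
lemma isTransvection_conj {n : ℕ} {R : Type*} [CommRing R]
    (U T : (Matrix (Fin n) (Fin n) R)ˣ) (hT : IsTransvection (T : Matrix (Fin n) (Fin n) R)) :
    IsTransvection ((U * T * U⁻¹ : (Matrix (Fin n) (Fin n) R)ˣ) : Matrix (Fin n) (Fin n) R) := by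
  obtain ⟨hne, hrank⟩ := hT
  constructor
  · intro h
    apply hne
    have h1 : (U * T * U⁻¹ : (Matrix (Fin n) (Fin n) R)ˣ) = 1 := Units.ext (by simpa using h)
    have h2 : U * T = U := mul_inv_eq_one.mp h1
    have : T = 1 := by simpa using mul_left_cancel (h2.trans (mul_one U).symm)
    rw [this, Units.val_one]
  · have hdecomp : ((U * T * U⁻¹ : (Matrix (Fin n) (Fin n) R)ˣ) : Matrix (Fin n) (Fin n) R) - 1
        = (U : Matrix (Fin n) (Fin n) R) * ((T : Matrix (Fin n) (Fin n) R) - 1)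
          * ((U⁻¹ : (Matrix (Fin n) (Fin n) R)ˣ) : Matrix (Fin n) (Fin n) R) := by
      push_cast
      rw [mul_sub, mul_one, sub_mul, Matrix.mul_nonsing_inv _ ((Matrix.isUnit_iff_isUnit_det _).mp U.isUnit)]
    rw [hdecomp,
      Matrix.rank_mul_eq_left_of_isUnit_det _ _
        ((Matrix.isUnit_iff_isUnit_det _).mp (U⁻¹).isUnit),
      Matrix.rank_mul_eq_right_of_isUnit_det _ _
        ((Matrix.isUnit_iff_isUnit_det _).mp U.isUnit),
      hrank]

/-- If the subgroup of `G ⊆ GSp_n(K̄)` generated by the transvections in `G` equals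
`Sp_n(K)`, then `G` normalises `Sp_n(K)`. -/
theorem subgroup_normalises_Sp
    {K : Type*} [Field K] {n : ℕ} (hn2 : 2 ≤ n) (hneven : Even n)
    (G : Subgroup (Matrix (Fin n) (Fin n) (AlgebraicClosure K))ˣ)
    (hGSp : ∀ A ∈ G, ∃ α : (AlgebraicClosure K)ˣ,
      (A : Matrix (Fin n) (Fin n) (AlgebraicClosure K))ᵀ * stdJ n (AlgebraicClosure K)
        * (A : Matrix (Fin n) (Fin n) (AlgebraicClosure K))
        = (α : AlgebraicClosure K) • stdJ n (AlgebraicClosure K))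
    (hgen : (Subgroup.closure {A | A ∈ G ∧
        IsTransvection (A : Matrix (Fin n) (Fin n) (AlgebraicClosure K))} :
        Set (Matrix (Fin n) (Fin n) (AlgebraicClosure K))ˣ) = SpOver K n) :
    ∀ A ∈ G, (fun B => A * B * A⁻¹) '' SpOver K n = SpOver K n := by
  intro A hA
  set S : Set (Matrix (Fin n) (Fin n) (AlgebraicClosure K))ˣ :=
    {B | B ∈ G ∧ IsTransvection (B : Matrix (Fin n) (Fin n) (AlgebraicClosure K))} with hS
  -- conjugation by any element of G maps S into S
  have key : ∀ U ∈ G, ∀ T ∈ S, U * T * U⁻¹ ∈ S := by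
    rintro U hU T ⟨hTG, hTt⟩
    exact ⟨mul_mem (mul_mem hU hTG) (inv_mem hU), isTransvection_conj U T hTt⟩
  -- hence conjugation by A maps S onto S
  have himg : (fun B => A * B * A⁻¹) '' S = S := by
    apply subset_antisymm
    · rintro _ ⟨T, hT, rfl⟩
      exact key A hA T hT
    · intro T hT
      refine ⟨A⁻¹ * T * A, ?_, by group⟩
      simpa using key A⁻¹ (inv_mem hA) T hT
  -- transport through the closure
  rw [← hgen]
  have hconj : (fun B => A * B * A⁻¹) = ⇑(MulAut.conj A).toMonoidHom := by
    funext B; simp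
  rw [hconj, ← Subgroup.coe_map, MonoidHom.map_closure, ← hconj, himg]

end
end

section
/- Let p and q be distinct primes and n ≥ 1 an integer such that the multiplicative order of q modulo p is exactly n (in particular n divides p − 1). Let ζ_p be a primitive p-th root of unity in an algebraic closure of ℚ. Then the element ξ_p := Σ_{i=0}^{n−1} ζ_p^{q^i} has degree (p − 1)/n over ℚ, i.e. [ℚ(ξ_p) : ℚ] = (p − 1)/n. -/
/-!
Write `ξ` as the Gauss period `∑_{h ∈ H} ζ^h` of the subgroup `H = ⟨q⟩ ≤ (ℤ/p)ˣ`, which has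
order `n`. The Galois group of `ℚ(ζ)/ℚ` is `(ℤ/p)ˣ`, with `a` acting by `ζ ↦ ζ^a`, and it
sends the period of `H` to `∑_{h ∈ aH} ζ^h`. Since `ζ, ζ², …, ζ^{p-1}` are linearly
independent over `ℚ`, these sums determine the coset `aH`; so the stabilizer of `ξ` is `H`,
and the degree of `ξ`, the size of its Galois orbit, is `[(ℤ/p)ˣ : H] = (p - 1)/n`.
-/

open Polynomial

theorem IsGalois.index_stabilizer_eq_natDegree_minpoly {k K : Type*} [Field k] [Field K]
    [Algebra k K] [IsGalois k K] (x : K) :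
    (MulAction.stabilizer Gal(K/k) x).index = (minpoly k x).natDegree := by
  have hx : IsSeparable k x := Algebra.IsSeparable.isSeparable k x
  have horbit : MulAction.orbit Gal(K/k) x = (minpoly k x).rootSet K := by
    ext y
    rw [← isConjRoot_iff_mem_minpoly_rootSet hx.isIntegral, isConjRoot_iff_orbitRel,
      MulAction.orbitRel_apply, MulAction.mem_orbit_symm]
  rw [MulAction.index_stabilizer, horbit, Set.ncard_eq_toFinset_card', Set.toFinset_card,
    card_rootSet_eq_natDegree hx (Normal.splits' x)]

theorem LinearIndependent.finset_sum_injective {R M ι : Type*} [Ring R] [Nontrivial R]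
    [AddCommGroup M] [Module R M] {v : ι → M} (hv : LinearIndependent R v) :
    Function.Injective fun s : Finset ι => ∑ i ∈ s, v i := by
  classical
  intro s t hst
  have hcomb (s : Finset ι) :
      ∑ i ∈ s, v i = Finsupp.linearCombination R v (∑ i ∈ s, Finsupp.single i 1) := by
    simp [map_sum]
  have hsingle := hv.finsuppLinearCombination_injective ((hcomb s).symm.trans (hst.trans (hcomb t)))
  ext i
  have hi := DFunLike.congr_fun hsingle i
  simp only [Finsupp.finsetSum_apply, Finsupp.single_apply, Finset.sum_ite_eq'] at hi
  by_cases hs : i ∈ s <;> by_cases ht : i ∈ t <;> simp [hs, ht] at hi ⊢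

section GaussPeriod

variable {p : ℕ} {L : Type*}

-- `ζ ^ x.val` is the power `ζ ^ x` for `x : ZMod p`, well defined when `ζ ^ p = 1`.
open scoped Classical in
noncomputable def gaussPeriod [NeZero p] [CommRing L] (H : Subgroup (ZMod p)ˣ) (ζ : L) : L :=
  ∑ h : H, ζ ^ ((h : (ZMod p)ˣ) : ZMod p).val

theorem map_gaussPeriod [NeZero p] [CommRing L] {L' : Type*} [CommRing L'] (f : L →+* L')
    (H : Subgroup (ZMod p)ˣ) (ζ : L) : f (gaussPeriod H ζ) = gaussPeriod H (f ζ) := by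
  simp [gaussPeriod]

theorem pow_val_pow_val [Monoid L] {ζ : L} (hζ : ζ ^ p = 1) (a b : ZMod p) :
    (ζ ^ a.val) ^ b.val = ζ ^ (a * b).val := by
  rw [← pow_mul, ZMod.val_mul, ← pow_eq_pow_mod _ hζ]

theorem gaussPeriod_pow_val_of_mem [NeZero p] [CommRing L] {ζ : L} (hζ : ζ ^ p = 1)
    (H : Subgroup (ZMod p)ˣ) {a : (ZMod p)ˣ} (ha : a ∈ H) :
    gaussPeriod H (ζ ^ (a : ZMod p).val) = gaussPeriod H ζ := by
  classical
  simp only [gaussPeriod, pow_val_pow_val hζ]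
  exact Fintype.sum_equiv (Equiv.mulLeft ⟨a, ha⟩) _ _ fun h => rfl

theorem sum_range_orderOf_eq_gaussPeriod_zpowers [NeZero p] [CommRing L] {ζ : L}
    (hζ : ζ ^ p = 1) {q : ℕ} (u : (ZMod p)ˣ) (hu : (u : ZMod p) = q) :
    ∑ i ∈ Finset.range (orderOf u), ζ ^ (q ^ i) = gaussPeriod (Subgroup.zpowers u) ζ := by
  classical
  rw [gaussPeriod, ← Fin.sum_univ_eq_sum_range]
  refine Fintype.sum_equiv (finEquivZPowers (isOfFinOrder_of_finite u)) _ _ fun i => ?_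
  rw [finEquivZPowers_apply, Units.val_pow_eq_pow_val, hu, ← Nat.cast_pow, ZMod.val_natCast,
    ← pow_eq_pow_mod _ hζ]

namespace IsPrimitiveRoot

variable [Fact p.Prime] [Field L] [CharZero L] {ζ : L}

-- `ζ, …, ζ^{p-1}` is `ζ` times the power basis `1, …, ζ^{p-2}` of `ℚ(ζ)`.
theorem linearIndependent_pow_val_units (hζ : IsPrimitiveRoot ζ p) :
    LinearIndependent ℚ fun a : (ZMod p)ˣ => ζ ^ (a : ZMod p).val := by
  have hdeg : (minpoly ℚ ζ).natDegree = p - 1 := by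
    rw [← cyclotomic_eq_minpoly_rat hζ (NeZero.pos p), natDegree_cyclotomic,
      Nat.totient_prime Fact.out]
  have hval (a : (ZMod p)ˣ) : 1 ≤ (a : ZMod p).val :=
    Nat.one_le_iff_ne_zero.mpr ((ZMod.val_ne_zero _).mpr a.ne_zero)
  let e (a : (ZMod p)ˣ) : Fin (minpoly ℚ ζ).natDegree :=
    ⟨(a : ZMod p).val - 1, by have := ZMod.val_lt (a : ZMod p); have := hval a; omega⟩
  have he : Function.Injective e := fun a b hab => by
    have := hval a; have := hval b; have := Fin.val_eq_of_eq hab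
    exact Units.ext (ZMod.val_injective p (by simp only [e] at this; omega))
  have hpow : (fun a : (ZMod p)ˣ => ζ ^ (a : ZMod p).val) =
      LinearMap.mulLeft ℚ ζ ∘ (fun i : Fin _ => ζ ^ (i : ℕ)) ∘ e := by
    funext a
    simp [e, ← pow_succ', Nat.sub_add_cancel (hval a)]
  rw [hpow]
  exact ((linearIndependent_pow ζ).comp e he).map' _
    (LinearMap.ker_eq_bot.mpr (mul_right_injective₀ (hζ.ne_zero (NeZero.ne p))))

theorem gaussPeriod_pow_val_eq_iff (hζ : IsPrimitiveRoot ζ p) (H : Subgroup (ZMod p)ˣ)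
    (a : (ZMod p)ˣ) : gaussPeriod H (ζ ^ (a : ZMod p).val) = gaussPeriod H ζ ↔ a ∈ H := by
  classical
  refine ⟨fun h => ?_, gaussPeriod_pow_val_of_mem hζ.pow_eq_one H⟩
  set u : (ZMod p)ˣ → L := fun x => ζ ^ (x : ZMod p).val
  have hcoset (b : (ZMod p)ˣ) : gaussPeriod H (ζ ^ (b : ZMod p).val) =
      ∑ x ∈ Finset.univ.image (fun h : H => b * h), u x := by
    rw [Finset.sum_image fun _ _ _ _ hxy => Subtype.ext (mul_left_cancel hxy)]
    simp [gaussPeriod, pow_val_pow_val hζ.pow_eq_one, u]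
  have hsums : ∑ x ∈ Finset.univ.image (fun h : H => a * h), u x =
      ∑ x ∈ Finset.univ.image (fun h : H => (1 : (ZMod p)ˣ) * h), u x := by
    rw [← hcoset, ← hcoset, Units.val_one, ZMod.val_one, pow_one, h]
  have ha : a ∈ Finset.univ.image (fun h : H => 1 * (h : (ZMod p)ˣ)) :=
    hζ.linearIndependent_pow_val_units.finset_sum_injective hsums ▸
      Finset.mem_image.mpr ⟨1, Finset.mem_univ _, mul_one a⟩
  obtain ⟨h, -, rfl⟩ := Finset.mem_image.mp ha
  simp

theorem stabilizer_gaussPeriod (hζ : IsPrimitiveRoot ζ p) (H : Subgroup (ZMod p)ˣ) :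
    MulAction.stabilizer Gal(L/ℚ) (gaussPeriod H ζ) = H.comap (hζ.autToPow ℚ) := by
  ext σ
  rw [MulAction.mem_stabilizer_iff, Subgroup.mem_comap, ← hζ.gaussPeriod_pow_val_eq_iff,
    autToPow_spec, AlgEquiv.smul_def]
  exact Iff.of_eq (congrArg (· = gaussPeriod H ζ) (map_gaussPeriod (σ : L →+* L) H ζ))

theorem natDegree_minpoly_gaussPeriod_of_isCyclotomicExtension [IsCyclotomicExtension {p} ℚ L]
    (hζ : IsPrimitiveRoot ζ p) (H : Subgroup (ZMod p)ˣ) :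
    (minpoly ℚ (gaussPeriod H ζ)).natDegree = H.index := by
  have : IsGalois ℚ L := IsCyclotomicExtension.isGalois {p} ℚ L
  have hsurj : Function.Surjective (hζ.autToPow ℚ) := by
    have hirr := cyclotomic.irreducible_rat (NeZero.pos p)
    exact ((hζ.autToPow_injective ℚ).bijective_of_nat_card_le
      (Nat.card_congr (IsCyclotomicExtension.autEquivPow L hirr).toEquiv).ge).2
  rw [← IsGalois.index_stabilizer_eq_natDegree_minpoly, hζ.stabilizer_gaussPeriod,
    Subgroup.index_comap_of_surjective _ hsurj]

open IntermediateField in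
theorem natDegree_minpoly_gaussPeriod (hζ : IsPrimitiveRoot ζ p) (H : Subgroup (ZMod p)ˣ) :
    (minpoly ℚ (gaussPeriod H ζ)).natDegree = H.index := by
  have hζ' : IsPrimitiveRoot (AdjoinSimple.gen ℚ ζ) p := coe_submonoidClass_iff.mp hζ
  have : IsCyclotomicExtension {p} ℚ ℚ⟮ζ⟯ := by
    change IsCyclotomicExtension {p} ℚ ℚ⟮ζ⟯.toSubalgebra
    rw [adjoin_simple_toSubalgebra_of_isAlgebraic
      ((hζ.isIntegral (NeZero.pos p)).tower_top (A := ℚ)).isAlgebraic]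
    exact hζ.adjoin_isCyclotomicExtension ℚ
  rw [← AdjoinSimple.algebraMap_gen ℚ ζ, ← map_gaussPeriod,
    minpoly.algebraMap_eq (algebraMap ℚ⟮ζ⟯ L).injective,
    natDegree_minpoly_gaussPeriod_of_isCyclotomicExtension hζ']

end IsPrimitiveRoot

end GaussPeriod

theorem gauss_period_degree_general
    (p q n : ℕ) (hp : p.Prime) (hn : 1 ≤ n)
    (hord : orderOf (q : ZMod p) = n)
    (ζ : AlgebraicClosure ℚ) (hζ : IsPrimitiveRoot ζ p) :
    (minpoly ℚ (∑ i ∈ Finset.range n, ζ ^ (q ^ i))).natDegree = (p - 1) / n := by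
  have : Fact p.Prime := ⟨hp⟩
  let u : (ZMod p)ˣ := Units.ofPowEqOne _ n (hord ▸ pow_orderOf_eq_one _) (by omega)
  have hu : orderOf u = n := by rw [← orderOf_units, Units.val_ofPowEqOne, hord]
  have hindex : (Subgroup.zpowers u).index = (p - 1) / n := by
    rw [← ZMod.card_units p, ← Nat.card_eq_fintype_card, ← (Subgroup.zpowers u).index_mul_card,
      Nat.card_zpowers, hu, Nat.mul_div_cancel _ (by omega)]
  have hu_val : (u : ZMod p) = q := Units.val_ofPowEqOne _ _ _ _
  rw [← hindex, ← hζ.natDegree_minpoly_gaussPeriod, ← hu,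
    sum_range_orderOf_eq_gaussPeriod_zpowers hζ.pow_eq_one u hu_val]

/-- If the multiplicative order of `q` modulo `p` is exactly `n`, then the Gauss
period `ξ_p = Σ_{i=0}^{n-1} ζ_p^{q^i}` has degree `(p-1)/n` over `ℚ`. -/
theorem gauss_period_degree
    (p q n : ℕ) (hp : p.Prime) (hq : q.Prime) (hpq : p ≠ q) (hn : 1 ≤ n)
    (hord : orderOf (q : ZMod p) = n)
    (ζ : AlgebraicClosure ℚ) (hζ : IsPrimitiveRoot ζ p) :
    (minpoly ℚ (∑ i ∈ Finset.range n, ζ ^ (q ^ i))).natDegree = (p - 1) / n :=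
  gauss_period_degree_general p q n hp hn hord ζ hζ
end
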